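/- Let z₀ ∈ ℂ, r > 0, and let (gₙ) be a sequence of meromorphic functions on the disk D_r(z₀) = {z : |z − z₀| < r} such that each gₙ is zero-free on D_{r/2}(z₀) (i.e., gₙ(z) ≠ 0 for all z with |z − z₀| < r/2). If (gₙ) converges locally uniformly, with respect to the spherical metric, to the constant ∞ on the punctured disk D_r(z₀) \ {z₀}, then (gₙ) converges locally uniformly to ∞ on the full disk D_{r/2}(z₀). -/

import Mathlib

open OnePoint Metric Filter Complex Set

noncomputable section

/-- The finite part of a point of the Riemann sphere `ℂ ∪ {∞}` (junk value `0` at `∞`). -/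
def sphToC (p : OnePoint ℂ) : ℂ := Option.elim p 0 id

open Classical in
/-- Inversion `w ↦ 1/w` on the Riemann sphere `ℂ ∪ {∞}`. -/
def sphInv (p : OnePoint ℂ) : OnePoint ℂ :=
  if p = ∞ then ((0 : ℂ) : OnePoint ℂ)
  else if sphToC p = 0 then ∞ else (((sphToC p)⁻¹ : ℂ) : OnePoint ℂ)

open Classical in
/-- The spherical (chordal) metric on the Riemann sphere `ℂ ∪ {∞}`. -/
def sphDist (p q : OnePoint ℂ) : ℝ :=
  if p = ∞ then
    (if q = ∞ then 0 else 2 / Real.sqrt (1 + ‖sphToC q‖ ^ 2))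
  else if q = ∞ then 2 / Real.sqrt (1 + ‖sphToC p‖ ^ 2)
  else 2 * ‖sphToC p - sphToC q‖ /
    (Real.sqrt (1 + ‖sphToC p‖ ^ 2) * Real.sqrt (1 + ‖sphToC q‖ ^ 2))

/-- `f : ℂ → ℂ ∪ {∞}` is meromorphic at `z`: near `z` it agrees with an analytic function,
or with the spherical inverse of an analytic function (covering poles and `≡ ∞`). -/
def SphMeromorphicAt (f : ℂ → OnePoint ℂ) (z : ℂ) : Prop :=
  (∃ g : ℂ → ℂ, AnalyticAt ℂ g z ∧ ∀ᶠ w in nhds z, f w = ((g w : ℂ) : OnePoint ℂ)) ∨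
  (∃ g : ℂ → ℂ, AnalyticAt ℂ g z ∧ ∀ᶠ w in nhds z, f w = sphInv ((g w : ℂ) : OnePoint ℂ))

/-- `f` is meromorphic (as a map to the Riemann sphere) on a set `Ω ⊆ ℂ`. -/
def SphMeromorphicOn (f : ℂ → OnePoint ℂ) (Ω : Set ℂ) : Prop :=
  ∀ z ∈ Ω, SphMeromorphicAt f z

/-- Locally uniform (= uniform on compact subsets, for open `Ω`) convergence of a sequence of
sphere-valued functions on `Ω`, with respect to the spherical metric. -/
def SphLocUnifOn (F : ℕ → ℂ → OnePoint ℂ) (g : ℂ → OnePoint ℂ) (Ω : Set ℂ) : Prop :=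
  ∀ K : Set ℂ, K ⊆ Ω → IsCompact K → ∀ ε : ℝ, 0 < ε →
    ∃ N : ℕ, ∀ n ≥ N, ∀ z ∈ K, sphDist (F n z) (g z) < ε

/-- A family `𝓕` of sphere-valued functions is normal on `Ω`: every sequence in `𝓕` has a
subsequence converging locally uniformly on `Ω` (spherical metric) to a meromorphic function
or to the constant `∞`. -/
def SphNormalOn (𝓕 : Set (ℂ → OnePoint ℂ)) (Ω : Set ℂ) : Prop :=
  ∀ F : ℕ → ℂ → OnePoint ℂ, (∀ n, F n ∈ 𝓕) →
    ∃ φ : ℕ → ℕ, StrictMono φ ∧ ∃ g : ℂ → OnePoint ℂ,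
      (SphMeromorphicOn g Ω ∨ ∀ z ∈ Ω, g z = ∞) ∧
      SphLocUnifOn (fun n => F (φ n)) g Ω

/-- A family is normal at a point if it is normal on some open neighbourhood of the point. -/
def SphNormalAt (𝓕 : Set (ℂ → OnePoint ℂ)) (z₀ : ℂ) : Prop :=
  ∃ U : Set ℂ, IsOpen U ∧ z₀ ∈ U ∧ SphNormalOn 𝓕 U

open Classical in
/-- The derivative of a sphere-valued meromorphic function: `∞` at poles (and where `f = ∞`),
and the usual derivative of the finite part elsewhere. -/
def sphDeriv (f : ℂ → OnePoint ℂ) : ℂ → OnePoint ℂ :=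
  fun z => if f z = ∞ then ∞ else ((deriv (fun w => sphToC (f w)) z : ℂ) : OnePoint ℂ)

/-- All zeros of `f` on `Ω` have multiplicity at least `m`: at every zero, the first `m`
derivatives (orders `0, …, m-1`) of the finite part of `f` vanish. -/
def SphZerosMultAtLeast (f : ℂ → OnePoint ℂ) (Ω : Set ℂ) (m : ℕ) : Prop :=
  ∀ z ∈ Ω, f z = ((0 : ℂ) : OnePoint ℂ) →
    ∀ j < m, iteratedDeriv j (fun w => sphToC (f w)) z = 0

/-!
On `D_{r/2}(z₀)` each `gₙ` is zero-free, so `1/gₙ` is holomorphic there, and spherical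
closeness of `gₙ` to `∞` is comparable to smallness of `|1/gₙ|`. A compact `K ⊆ D_{r/2}(z₀)`
lies inside a circle `|z - z₀| = ρ < r/2`, a compact subset of the punctured disk on which
`1/gₙ → 0` uniformly; by the maximum modulus principle the same bound holds on the closed disk
bounded by that circle, hence on `K`.
-/

@[simp]
lemma sphToC_coe (c : ℂ) : sphToC (c : OnePoint ℂ) = c := rfl

@[simp]
lemma sphToC_infty : sphToC ∞ = 0 := rfl

@[simp]
lemma sphInv_infty : sphInv ∞ = ((0 : ℂ) : OnePoint ℂ) := by
  simp [sphInv]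

@[simp]
lemma sphInv_coe_zero : sphInv ((0 : ℂ) : OnePoint ℂ) = ∞ := by
  simp [sphInv]

lemma sphInv_coe_of_ne_zero {c : ℂ} (hc : c ≠ 0) :
    sphInv (c : OnePoint ℂ) = ((c⁻¹ : ℂ) : OnePoint ℂ) := by
  simp [sphInv, hc]

lemma sphInv_sphInv_coe (c : ℂ) : sphInv (sphInv (c : OnePoint ℂ)) = c := by
  rcases eq_or_ne c 0 with rfl | hc
  · simp
  · rw [sphInv_coe_of_ne_zero hc, sphInv_coe_of_ne_zero (inv_ne_zero hc), inv_inv]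

lemma sphDist_coe_infty (w : ℂ) :
    sphDist (w : OnePoint ℂ) ∞ = 2 / Real.sqrt (1 + ‖w‖ ^ 2) := by
  simp [sphDist]

lemma SphMeromorphicAt.analyticAt_sphToC_sphInv {f : ℂ → OnePoint ℂ} {z : ℂ}
    (hf : SphMeromorphicAt f z) (hz : f z ≠ ((0 : ℂ) : OnePoint ℂ)) :
    AnalyticAt ℂ (fun w => sphToC (sphInv (f w))) z := by
  rcases hf with ⟨φ, hφ, hfφ⟩ | ⟨φ, hφ, hfφ⟩
  · have hφz : φ z ≠ 0 := fun h => hz (by rw [hfφ.self_of_nhds, h])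
    refine (hφ.inv hφz).congr ?_
    filter_upwards [hfφ, hφ.continuousAt.eventually_ne hφz] with w hw hφw
    rw [hw, sphInv_coe_of_ne_zero hφw, sphToC_coe, Pi.inv_apply]
  · refine hφ.congr ?_
    filter_upwards [hfφ] with w hw
    rw [hw, sphInv_sphInv_coe, sphToC_coe]

lemma sphDist_infty_le_two_mul_norm_sphToC_sphInv {p : OnePoint ℂ}
    (hp : p ≠ ((0 : ℂ) : OnePoint ℂ)) : sphDist p ∞ ≤ 2 * ‖sphToC (sphInv p)‖ := by
  induction p using OnePoint.rec with
  | infty => simp [sphDist]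
  | coe w =>
    have hw : w ≠ 0 := fun h => hp (by rw [h])
    have hs : ‖w‖ ≤ Real.sqrt (1 + ‖w‖ ^ 2) := Real.le_sqrt_of_sq_le (by linarith)
    rw [sphInv_coe_of_ne_zero hw, sphToC_coe, sphDist_coe_infty, norm_inv, ← div_eq_mul_inv]
    gcongr

-- The hypothesis keeps `p` away from `0`, where `‖1/p‖` is large but `sphDist p ∞` is about `2`.
lemma norm_sphToC_sphInv_le_sphDist_infty {p : OnePoint ℂ} (hp : sphDist p ∞ < 1) :
    ‖sphToC (sphInv p)‖ ≤ sphDist p ∞ := by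
  induction p using OnePoint.rec with
  | infty => simp [sphDist]
  | coe w =>
    rcases eq_or_ne w 0 with rfl | hw
    · simp only [sphInv_coe_zero, sphToC_infty, norm_zero, sphDist_coe_infty]
      positivity
    rw [sphDist_coe_infty] at hp ⊢
    have ha : 0 < ‖w‖ := norm_pos_iff.mpr hw
    have hs : 0 < Real.sqrt (1 + ‖w‖ ^ 2) := Real.sqrt_pos.mpr (by positivity)
    have h2 : 2 < Real.sqrt (1 + ‖w‖ ^ 2) := by rwa [div_lt_one hs] at hp
    have h4 : 2 ^ 2 < 1 + ‖w‖ ^ 2 := (Real.lt_sqrt zero_le_two).mp h2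
    rw [sphInv_coe_of_ne_zero hw, sphToC_coe, norm_inv, inv_eq_one_div,
      div_le_div_iff₀ ha hs, one_mul]
    exact Real.sqrt_le_iff.mpr ⟨by positivity, by nlinarith⟩

theorem norm_le_of_forall_mem_sphere_norm_le {E F : Type*} [NormedAddCommGroup E]
    [NormedSpace ℂ E] [Nontrivial E] [NormedAddCommGroup F] [NormedSpace ℂ F] {f : E → F}
    {c : E} {ρ C : ℝ}
    (hρ : ρ ≠ 0) (hd : DifferentiableOn ℂ f (closedBall c ρ))
    (hC : ∀ z ∈ sphere c ρ, ‖f z‖ ≤ C) {z : E} (hz : z ∈ closedBall c ρ) : ‖f z‖ ≤ C := by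
  rw [← closure_ball c hρ] at hd hz
  exact norm_le_of_forall_mem_frontier_norm_le isBounded_ball hd.diffContOnCl
    (by rwa [frontier_ball c hρ]) hz

theorem sphDist_infty_le_of_forall_mem_sphere {f : ℂ → OnePoint ℂ} {c : ℂ} {ρ δ : ℝ}
    (hρ : ρ ≠ 0) (hf : SphMeromorphicOn f (closedBall c ρ))
    (hf0 : ∀ z ∈ closedBall c ρ, f z ≠ ((0 : ℂ) : OnePoint ℂ)) (hδ : δ ≤ 1)
    (hsph : ∀ w ∈ sphere c ρ, sphDist (f w) ∞ < δ) {z : ℂ} (hz : z ∈ closedBall c ρ) :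
    sphDist (f z) ∞ ≤ 2 * δ := by
  have hd : DifferentiableOn ℂ (fun w => sphToC (sphInv (f w))) (closedBall c ρ) :=
    fun w hw => ((hf w hw).analyticAt_sphToC_sphInv (hf0 w hw)).differentiableWithinAt
  have hinv : ∀ w ∈ sphere c ρ, ‖sphToC (sphInv (f w))‖ ≤ δ := fun w hw =>
    (norm_sphToC_sphInv_le_sphDist_infty ((hsph w hw).trans_le hδ)).trans (hsph w hw).le
  calc sphDist (f z) ∞ ≤ 2 * ‖sphToC (sphInv (f z))‖ :=
        sphDist_infty_le_two_mul_norm_sphToC_sphInv (hf0 z hz)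
    _ ≤ 2 * δ := by gcongr; exact norm_le_of_forall_mem_sphere_norm_le hρ hd hinv hz

/-- If `gₙ` are meromorphic on `D_r(z₀)`, zero-free on `D_{r/2}(z₀)`, and converge locally
uniformly (spherical metric) to the constant `∞` on the punctured disk `D_r(z₀) \ {z₀}`, then
they converge locally uniformly to `∞` on the full disk `D_{r/2}(z₀)`. -/
theorem locUnif_tendsto_infty_on_disk_of_punctured
    (z₀ : ℂ) (r : ℝ) (hr : 0 < r)
    (g : ℕ → ℂ → OnePoint ℂ)
    (hmero : ∀ n, SphMeromorphicOn (g n) (ball z₀ r))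
    (hzf : ∀ n, ∀ z ∈ ball z₀ (r / 2), g n z ≠ ((0 : ℂ) : OnePoint ℂ))
    (hconv : SphLocUnifOn g (fun _ => ∞) (ball z₀ r \ {z₀})) :
    SphLocUnifOn g (fun _ => ∞) (ball z₀ (r / 2)) := by
  intro K hK hKc ε hε
  obtain ⟨ρ, ⟨hρ, hρr⟩, hKρ⟩ := exists_pos_lt_subset_ball (half_pos hr) hKc.isClosed hK
  have hdisk : closedBall z₀ ρ ⊆ ball z₀ (r / 2) := closedBall_subset_ball hρr
  have hsphere : sphere z₀ ρ ⊆ ball z₀ r \ {z₀} := fun w hw =>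
    ⟨sphere_subset_ball (by linarith) hw, ne_of_mem_sphere hw hρ.ne'⟩
  set δ := min (ε / 3) 1
  obtain ⟨N, hN⟩ := hconv _ hsphere (isCompact_sphere z₀ ρ) δ (by positivity)
  refine ⟨N, fun n hn z hz => ?_⟩
  calc sphDist (g n z) ∞
      ≤ 2 * δ := sphDist_infty_le_of_forall_mem_sphere hρ.ne'
        (fun w hw => hmero n w (ball_subset_ball (by linarith) (hdisk hw)))
        (fun w hw => hzf n w (hdisk hw)) (min_le_right _ _) (hN n hn)
        (ball_subset_closedBall (hKρ hz))
    _ < ε := by linarith [min_le_left (ε / 3) 1]
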